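/- Let m, p ≥ 1, let F : [−π, π] → ℂ^{p×m} and G, L : [−π, π] → ℂ^{m×m} be measurable matrix-valued functions with L(ω)·G(ω) = I_m for almost every ω, and let K = diag(k₁, …, k_m) with all k_i > 0. Assume the functions ω ↦ Tr((G(ω)K)ᴴ (G(ω)K)), ω ↦ Tr((F(ω)L(ω))ᴴ (F(ω)L(ω))), and ω ↦ ‖F(ω)K‖_* are integrable. Then ((1/2π) ∫_{−π}^{π} Tr((G(ω)K)ᴴ G(ω)K) dω) · ((1/2π) ∫_{−π}^{π} Tr((F(ω)L(ω))ᴴ F(ω)L(ω)) dω) ≥ ((1/2π) ∫_{−π}^{π} ‖F(ω)K‖_* dω)², where all traces are (real) nonnegative. (Lower bound on the achievable mean squared error of any zero-forcing-equalization mechanism with a general, not necessarily diagonal, pre-filter.) -/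

import Mathlib

open MeasureTheory Real Matrix
open scoped ComplexOrder

instance (l n : Type*) (α : Type*) [MeasurableSpace α] :
    MeasurableSpace (Matrix l n α) := MeasurableSpace.pi

/-- Nuclear norm of a complex matrix: the trace of the unique positive-semidefinite
square root of `Mᴴ M` (equivalently, the sum of the singular values of `M`). -/
noncomputable def nuclearNorm {p m : ℕ} (M : Matrix (Fin p) (Fin m) ℂ) : ℝ :=
  (((Matrix.posSemidef_conjTranspose_mul_self M).1.eigenvectorUnitary.1 *
      Matrix.diagonal ((fun x : ℝ => (x : ℂ)) ∘ (√·) ∘ (Matrix.posSemidef_conjTranspose_mul_self M).1.eigenvalues) *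
      (star (Matrix.posSemidef_conjTranspose_mul_self M).1.eigenvectorUnitary :
        Matrix (Fin m) (Fin m) ℂ)).trace).re

/-
Since `L G = 1` a.e., `F K = (F L) (G K)`. The nuclear norm of a product is at most the product
of the Frobenius norms of the factors: by the polar decomposition, `‖M‖_* = Re tr (V M)` for a
partial isometry `V`, and then `Re tr (V A B) = Re ⟪Aᴴ Vᴴ, B⟫_F ≤ ‖Aᴴ Vᴴ‖_F ‖B‖_F ≤ ‖A‖_F ‖B‖_F`.
Integrating this pointwise bound and applying Cauchy–Schwarz in `L²` gives the inequality.
-/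

namespace Matrix

variable {l m n : Type*} [Fintype l] [Fintype m] [Fintype n]

lemma re_trace_conjTranspose_mul_self (C : Matrix m n ℂ) :
    (Cᴴ * C).trace.re = ∑ j, ∑ i, ‖C i j‖ ^ 2 := by
  simp only [trace, diag, mul_apply, conjTranspose_apply, Complex.re_sum, Complex.star_def,
    mul_comm (starRingEnd ℂ _), Complex.mul_conj, Complex.ofReal_re, Complex.normSq_eq_norm_sq]

lemma re_trace_conjTranspose_mul_self_nonneg (C : Matrix m n ℂ) : 0 ≤ (Cᴴ * C).trace.re :=
  (Complex.nonneg_iff.mp (posSemidef_conjTranspose_mul_self C).trace_nonneg).1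

lemma re_trace_conjTranspose_mul_le (X Y : Matrix m n ℂ) :
    (Xᴴ * Y).trace.re ≤ √(Xᴴ * X).trace.re * √(Yᴴ * Y).trace.re := by
  have hre : (Xᴴ * Y).trace.re ≤ ∑ j, ∑ i, ‖X i j‖ * ‖Y i j‖ := by
    simp only [trace, diag, mul_apply, conjTranspose_apply, Complex.re_sum]
    gcongr with j _ i _
    exact (Complex.re_le_norm _).trans_eq (by simp)
  rw [re_trace_conjTranspose_mul_self, re_trace_conjTranspose_mul_self]
  simp only [← Fintype.sum_prod_type'] at hre ⊢
  exact hre.trans (Real.sum_mul_le_sqrt_mul_sqrt _ _ _)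

lemma trace_conjTranspose_mul_mul_self {k : Type*} [Fintype k] (X : Matrix m n ℂ)
    (Q : Matrix n k ℂ) : ((X * Q)ᴴ * (X * Q)).trace = (Xᴴ * X * (Q * Qᴴ)).trace := by
  rw [conjTranspose_mul, Matrix.mul_assoc, trace_mul_comm, Matrix.mul_assoc, Matrix.mul_assoc,
    Matrix.mul_assoc]

def IsPartialIsometry (V : Matrix m n ℂ) : Prop := V * Vᴴ * V = V

lemma IsPartialIsometry.re_trace_conjTranspose_mul_self_le {V : Matrix l n ℂ}
    (hV : V.IsPartialIsometry) (X : Matrix m n ℂ) :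
    ((X * Vᴴ)ᴴ * (X * Vᴴ)).trace.re ≤ (Xᴴ * X).trace.re := by
  classical
  set P := Vᴴ * V
  have hPP : P * P = P := by
    rw [Matrix.mul_assoc, ← Matrix.mul_assoc V, hV]
  have hPH : Pᴴ = P := by simp [P]
  have hcompl : (1 - P) * (1 - P)ᴴ = 1 - P := by
    rw [conjTranspose_sub, conjTranspose_one, hPH, Matrix.sub_mul, Matrix.one_mul,
      Matrix.mul_sub, Matrix.mul_one, hPP, sub_self, sub_zero]
  have hsplit : (Xᴴ * X).trace =
      ((X * Vᴴ)ᴴ * (X * Vᴴ)).trace + ((X * (1 - P))ᴴ * (X * (1 - P))).trace := by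
    rw [trace_conjTranspose_mul_mul_self, trace_conjTranspose_mul_mul_self, hcompl,
      conjTranspose_conjTranspose, ← trace_add, ← Matrix.mul_add, add_sub_cancel, Matrix.mul_one]
  rw [hsplit, Complex.add_re]
  linarith [re_trace_conjTranspose_mul_self_nonneg (X * (1 - P))]

lemma IsPartialIsometry.re_trace_mul_mul_le {V : Matrix n l ℂ} (hV : V.IsPartialIsometry)
    (A : Matrix l m ℂ) (B : Matrix m n ℂ) :
    (V * A * B).trace.re ≤ √(Aᴴ * A).trace.re * √(Bᴴ * B).trace.re := by
  have hA : ((Aᴴ * Vᴴ)ᴴ * (Aᴴ * Vᴴ)).trace.re ≤ (Aᴴ * A).trace.re := by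
    simpa only [conjTranspose_conjTranspose, trace_mul_comm A] using
      hV.re_trace_conjTranspose_mul_self_le Aᴴ
  calc (V * A * B).trace.re = ((Aᴴ * Vᴴ)ᴴ * B).trace.re := by
        rw [conjTranspose_mul, conjTranspose_conjTranspose, conjTranspose_conjTranspose]
    _ ≤ √((Aᴴ * Vᴴ)ᴴ * (Aᴴ * Vᴴ)).trace.re * √(Bᴴ * B).trace.re :=
        re_trace_conjTranspose_mul_le _ _
    _ ≤ √(Aᴴ * A).trace.re * √(Bᴴ * B).trace.re := by gcongr

lemma trace_conjStarAlgAut [DecidableEq n] (U : unitary (Matrix n n ℂ)) (X : Matrix n n ℂ) :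
    (Unitary.conjStarAlgAut ℂ _ U X).trace = X.trace := by
  rw [Unitary.conjStarAlgAut_apply, trace_mul_cycle, Unitary.coe_star_mul_self, Matrix.one_mul]

end Matrix

section NuclearNorm

variable {p m : ℕ}

lemma nuclearNorm_eq_sum_sqrt_eigenvalues (M : Matrix (Fin p) (Fin m) ℂ) :
    nuclearNorm M = ∑ i, √((isHermitian_conjTranspose_mul_self M).eigenvalues i) := by
  rw [nuclearNorm, ← Unitary.conjStarAlgAut_apply (S := ℂ), trace_conjStarAlgAut, trace_diagonal,
    Complex.re_sum]
  simp

lemma nuclearNorm_nonneg (M : Matrix (Fin p) (Fin m) ℂ) : 0 ≤ nuclearNorm M := by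
  rw [nuclearNorm_eq_sum_sqrt_eigenvalues]
  positivity

lemma exists_isPartialIsometry_nuclearNorm_eq (M : Matrix (Fin p) (Fin m) ℂ) :
    ∃ V : Matrix (Fin m) (Fin p) ℂ, V.IsPartialIsometry ∧ nuclearNorm M = (V * M).trace.re := by
  set hH := isHermitian_conjTranspose_mul_self M
  set φ := Unitary.conjStarAlgAut ℂ (Matrix (Fin m) (Fin m) ℂ) hH.eigenvectorUnitary
  set σ : Fin m → ℂ := fun i => (√(hH.eigenvalues i) : ℂ)
  have hspec : Mᴴ * M = φ (diagonal (σ * σ)) := by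
    conv_lhs => rw [hH.spectral_theorem]
    congr 2
    ext i
    simp [σ, ← Complex.ofReal_mul,
      Real.mul_self_sqrt (eigenvalues_conjTranspose_mul_self_nonneg M i)]
  have hnuc : nuclearNorm M = (φ (diagonal σ)).trace.re := rfl
  -- `R = (Mᴴ M)^(-1/2)` as a pseudo-inverse, via `0⁻¹ = 0`; then `R Mᴴ` is the polar factor of `M`.
  set R := φ (diagonal σ⁻¹)
  have hR : Rᴴ = R := by
    rw [← star_eq_conjTranspose, ← map_star, star_eq_conjTranspose, diagonal_conjTranspose]
    congr 2
    ext i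
    simp [σ]
  have hσ : ∀ i, (σ i)⁻¹ * (σ i * σ i) = σ i := fun i => by
    rcases eq_or_ne (σ i) 0 with h | h <;> field_simp [h]
  refine ⟨R * Mᴴ, ?_, ?_⟩
  · show R * Mᴴ * (R * Mᴴ)ᴴ * (R * Mᴴ) = R * Mᴴ
    rw [conjTranspose_mul, conjTranspose_conjTranspose, hR]
    calc R * Mᴴ * (M * R) * (R * Mᴴ) = R * (Mᴴ * M) * R * R * Mᴴ := by
          simp only [Matrix.mul_assoc]
      _ = R * Mᴴ := by
          rw [hspec]
          simp only [R, ← map_mul, diagonal_mul_diagonal]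
          congr 3
          ext i
          simp only [Pi.inv_apply, Pi.mul_apply]
          rcases eq_or_ne (σ i) 0 with h | h <;> field_simp [h]
  · rw [Matrix.mul_assoc, hspec, ← map_mul, diagonal_mul_diagonal, hnuc]
    simp only [Pi.inv_apply, Pi.mul_apply, hσ]

lemma nuclearNorm_mul_le {n : Type*} [Fintype n] (A : Matrix (Fin p) n ℂ)
    (B : Matrix n (Fin m) ℂ) :
    nuclearNorm (A * B) ≤ √(Aᴴ * A).trace.re * √(Bᴴ * B).trace.re := by
  obtain ⟨V, hV, h⟩ := exists_isPartialIsometry_nuclearNorm_eq (A * B)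
  rw [h, ← Matrix.mul_assoc]
  exact hV.re_trace_mul_mul_le A B

end NuclearNorm

section Integral

variable {α : Type*} [MeasurableSpace α] {μ : Measure α} {f g : α → ℝ}

lemma MeasureTheory.Integrable.memLp_two_sqrt (hf : Integrable f μ) (hf0 : 0 ≤ᵐ[μ] f) :
    MemLp (fun x => √(f x)) 2 μ := by
  refine (memLp_two_iff_integrable_sq
    (Real.continuous_sqrt.comp_aestronglyMeasurable hf.1)).2 (hf.congr ?_)
  filter_upwards [hf0] with x hx
  exact (Real.sq_sqrt hx).symm

lemma MeasureTheory.Integrable.sqrt_mul_sqrt (hf : Integrable f μ) (hg : Integrable g μ)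
    (hf0 : 0 ≤ᵐ[μ] f) (hg0 : 0 ≤ᵐ[μ] g) : Integrable (fun x => √(f x) * √(g x)) μ :=
  (hf.memLp_two_sqrt hf0).integrable_mul (hg.memLp_two_sqrt hg0)

lemma integral_sqrt_mul_sqrt_le (hf : Integrable f μ) (hg : Integrable g μ)
    (hf0 : 0 ≤ᵐ[μ] f) (hg0 : 0 ≤ᵐ[μ] g) :
    ∫ x, √(f x) * √(g x) ∂μ ≤ √(∫ x, f x ∂μ) * √(∫ x, g x ∂μ) := by
  have h := integral_mul_le_Lp_mul_Lq_of_nonneg Real.HolderConjugate.two_two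
    (Filter.Eventually.of_forall fun x => Real.sqrt_nonneg (f x))
    (Filter.Eventually.of_forall fun x => Real.sqrt_nonneg (g x))
    (by simpa using hf.memLp_two_sqrt hf0) (by simpa using hg.memLp_two_sqrt hg0)
  have hsq : ∀ {h : α → ℝ}, 0 ≤ᵐ[μ] h → ∫ x, √(h x) ^ (2 : ℝ) ∂μ = ∫ x, h x ∂μ := fun hh0 =>
    integral_congr_ae (by filter_upwards [hh0] with x hx; simp [Real.sq_sqrt hx])
  rwa [hsq hf0, hsq hg0, ← Real.sqrt_eq_rpow, ← Real.sqrt_eq_rpow] at h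

end Integral

theorem zfe_general_prefilter_lower_bound (m p : ℕ)
    (F : ℝ → Matrix (Fin p) (Fin m) ℂ) (G L : ℝ → Matrix (Fin m) (Fin m) ℂ)
    (hinv : ∀ᵐ ω ∂(volume.restrict (Set.Icc (-π) π)), L ω * G ω = 1)
    (K : Matrix (Fin m) (Fin m) ℂ)
    (hGK : IntegrableOn (fun ω => (((G ω * K)ᴴ * (G ω * K)).trace).re) (Set.Icc (-π) π))
    (hFL : IntegrableOn (fun ω => (((F ω * L ω)ᴴ * (F ω * L ω)).trace).re) (Set.Icc (-π) π))
    (hFK : IntegrableOn (fun ω => nuclearNorm (F ω * K)) (Set.Icc (-π) π)) :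
    ((1 / (2 * π)) * ∫ ω in Set.Icc (-π) π, (((G ω * K)ᴴ * (G ω * K)).trace).re) *
        ((1 / (2 * π)) * ∫ ω in Set.Icc (-π) π, (((F ω * L ω)ᴴ * (F ω * L ω)).trace).re) ≥
      ((1 / (2 * π)) * ∫ ω in Set.Icc (-π) π, nuclearNorm (F ω * K)) ^ 2 := by
  have hGK0 : 0 ≤ᵐ[volume.restrict (Set.Icc (-π) π)]
      fun ω => ((G ω * K)ᴴ * (G ω * K)).trace.re :=
    .of_forall fun ω => re_trace_conjTranspose_mul_self_nonneg _
  have hFL0 : 0 ≤ᵐ[volume.restrict (Set.Icc (-π) π)]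
      fun ω => ((F ω * L ω)ᴴ * (F ω * L ω)).trace.re :=
    .of_forall fun ω => re_trace_conjTranspose_mul_self_nonneg _
  have hpointwise : ∀ᵐ ω ∂(volume.restrict (Set.Icc (-π) π)), nuclearNorm (F ω * K) ≤
      √((F ω * L ω)ᴴ * (F ω * L ω)).trace.re * √((G ω * K)ᴴ * (G ω * K)).trace.re := by
    filter_upwards [hinv] with ω hω
    rw [show F ω * K = F ω * L ω * (G ω * K) by
      rw [Matrix.mul_assoc, ← Matrix.mul_assoc (L ω), hω, Matrix.one_mul]]
    exact nuclearNorm_mul_le _ _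
  set X := ∫ ω in Set.Icc (-π) π, (((G ω * K)ᴴ * (G ω * K)).trace).re
  set Y := ∫ ω in Set.Icc (-π) π, (((F ω * L ω)ᴴ * (F ω * L ω)).trace).re
  set N := ∫ ω in Set.Icc (-π) π, nuclearNorm (F ω * K)
  have hN : N ≤ √Y * √X := (integral_mono_ae hFK (hFL.sqrt_mul_sqrt hGK hFL0 hGK0)
    hpointwise).trans (integral_sqrt_mul_sqrt_le hFL hGK hFL0 hGK0)
  have hN0 : 0 ≤ N := integral_nonneg fun ω => nuclearNorm_nonneg _
  have hN2 : N ^ 2 ≤ Y * X := by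
    calc N ^ 2 ≤ (√Y * √X) ^ 2 := pow_le_pow_left₀ hN0 hN 2
      _ = Y * X := by rw [mul_pow, sq_sqrt (integral_nonneg_of_ae hFL0),
          sq_sqrt (integral_nonneg_of_ae hGK0)]
  calc (1 / (2 * π) * N) ^ 2 = (1 / (2 * π)) ^ 2 * N ^ 2 := by ring
    _ ≤ (1 / (2 * π)) ^ 2 * (Y * X) := by gcongr
    _ = 1 / (2 * π) * X * (1 / (2 * π) * Y) := by ring
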